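/- The following are equivalent: (1) for every four-party pure quantum state, r_{BC} ≤ r_{AB} · r_{AC}; (2) for all K and all m₁×n₁ matrices R₁,...,R_K and m₂×n₂ matrices S₁,...,S_K, rank(Σᵢ Rᵢ ⊗ Sᵢᵀ) ≤ K · rank(Σᵢ Rᵢ ⊗ Sᵢ). -/

import Mathlib

open Matrix Kronecker Module

/-!
Write `ψ_{abcd} = ∑ₖ (Rₖ)_{ba} (Sₖ)_{dc}`, the Schmidt-type decomposition across `AB : CD`. Then the
`BC` flattening of `ψ` is `∑ₖ Rₖ ⊗ Sₖᵀ`, the `AC` flattening is `(∑ₖ Rₖ ⊗ Sₖ)ᵀ`, and the `AB`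
flattening factors through `K` terms, so `r_AB ≤ K`. Conversely, a rank factorization of the `AB`
flattening writes any `ψ` in this form with `K = r_AB`. Under this dictionary the two hypotheses say
the same thing.
-/

theorem Matrix.exists_eq_mul_of_rank {𝕜 m n : Type*} [Field 𝕜] [Fintype m] [Fintype n]
    (A : Matrix m n 𝕜) :
    ∃ (B : Matrix m (Fin A.rank) 𝕜) (C : Matrix (Fin A.rank) n 𝕜), A = B * C := by
  let V := Submodule.span 𝕜 (Set.range A.col)
  let b : Basis (Fin A.rank) 𝕜 V := finBasisOfFinrankEq 𝕜 V (rank_eq_finrank_span_cols A).symm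
  have hcol : ∀ j, A.col j ∈ V := fun j => Submodule.subset_span ⟨j, rfl⟩
  refine ⟨of fun i k => (b k : m → 𝕜) i, of fun k j => b.repr ⟨A.col j, hcol j⟩ k, ?_⟩
  ext i j
  have hsum := congrArg (fun x : V => (x : m → 𝕜) i) (b.sum_repr ⟨A.col j, hcol j⟩)
  simp only [Submodule.coe_sum, SetLike.val_smul, Finset.sum_apply, Pi.smul_apply,
    smul_eq_mul] at hsum
  simpa [mul_apply, mul_comm] using hsum.symm

section Flattening

variable {𝕜 α β γ δ ι : Type*}

-- `(flattenXY ψ).rank` is the Schmidt rank `r_XY` of `ψ` across `XY : complement`.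
def flattenAB (ψ : α → β → γ → δ → 𝕜) : Matrix (α × β) (γ × δ) 𝕜 :=
  of fun p x => ψ p.1 p.2 x.1 x.2

def flattenAC (ψ : α → β → γ → δ → 𝕜) : Matrix (α × γ) (β × δ) 𝕜 :=
  of fun p x => ψ p.1 x.1 p.2 x.2

def flattenBC (ψ : α → β → γ → δ → 𝕜) : Matrix (β × γ) (α × δ) 𝕜 :=
  of fun p x => ψ x.1 p.1 p.2 x.2

@[simp]
theorem flattenBC_zero [Zero 𝕜] : flattenBC (0 : α → β → γ → δ → 𝕜) = 0 :=
  rfl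

variable [CommSemiring 𝕜] [Fintype ι]

def tensorOfTerms (R : ι → Matrix β α 𝕜) (S : ι → Matrix δ γ 𝕜) : α → β → γ → δ → 𝕜 :=
  fun a b c d => ∑ k, R k b a * S k d c

theorem flattenBC_tensorOfTerms (R : ι → Matrix β α 𝕜) (S : ι → Matrix δ γ 𝕜) :
    flattenBC (tensorOfTerms R S) = ∑ k, R k ⊗ₖ (S k)ᵀ := by
  ext ⟨b, c⟩ ⟨a, d⟩
  simp [flattenBC, tensorOfTerms, Matrix.sum_apply]

theorem flattenAC_tensorOfTerms (R : ι → Matrix β α 𝕜) (S : ι → Matrix δ γ 𝕜) :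
    flattenAC (tensorOfTerms R S) = (∑ k, R k ⊗ₖ S k)ᵀ := by
  ext ⟨a, c⟩ ⟨b, d⟩
  simp [flattenAC, tensorOfTerms, Matrix.sum_apply]

theorem flattenAB_tensorOfTerms (R : ι → Matrix β α 𝕜) (S : ι → Matrix δ γ 𝕜) :
    flattenAB (tensorOfTerms R S) =
      (of fun p k => R k p.2 p.1 : Matrix (α × β) ι 𝕜) * of fun k x => S k x.2 x.1 := by
  ext ⟨a, b⟩ ⟨c, d⟩
  simp [flattenAB, tensorOfTerms, mul_apply]

theorem rank_flattenAB_tensorOfTerms_le [StrongRankCondition 𝕜] [Fintype γ] [Fintype δ]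
    (R : ι → Matrix β α 𝕜) (S : ι → Matrix δ γ 𝕜) :
    (flattenAB (tensorOfTerms R S)).rank ≤ Fintype.card ι := by
  rw [flattenAB_tensorOfTerms]
  exact (rank_mul_le_left _ _).trans (rank_le_card_width _)

theorem exists_tensorOfTerms_eq {𝕜 : Type*} [Field 𝕜] [Fintype α] [Fintype β] [Fintype γ]
    [Fintype δ] (ψ : α → β → γ → δ → 𝕜) :
    ∃ (R : Fin (flattenAB ψ).rank → Matrix β α 𝕜) (S : Fin (flattenAB ψ).rank → Matrix δ γ 𝕜),
      tensorOfTerms R S = ψ := by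
  obtain ⟨B, C, hBC⟩ := (flattenAB ψ).exists_eq_mul_of_rank
  refine ⟨fun k => of fun b a => B (a, b) k, fun k => of fun d c => C k (c, d), ?_⟩
  funext a b c d
  exact (congrFun₂ hBC (a, b) (c, d)).symm

end Flattening

/-- The hypothesis `r_BC ≤ r_AB · r_AC` for all four-party pure states is
equivalent to the matrix-rank hypothesis
`rank(Σᵢ Rᵢ ⊗ Sᵢᵀ) ≤ K · rank(Σᵢ Rᵢ ⊗ Sᵢ)`. -/
theorem rank_hypothesis_iff_matrix_hypothesis :
    (∀ (dA dB dC dD : ℕ) (ψ : Fin dA → Fin dB → Fin dC → Fin dD → ℂ), ψ ≠ 0 →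
      (Matrix.of fun (p : Fin dB × Fin dC) (x : Fin dA × Fin dD) =>
          ψ x.1 p.1 p.2 x.2).rank ≤
        (Matrix.of fun (p : Fin dA × Fin dB) (x : Fin dC × Fin dD) =>
            ψ p.1 p.2 x.1 x.2).rank *
        (Matrix.of fun (p : Fin dA × Fin dC) (x : Fin dB × Fin dD) =>
            ψ p.1 x.1 p.2 x.2).rank) ↔
    (∀ (K m₁ n₁ m₂ n₂ : ℕ) (R : Fin K → Matrix (Fin m₁) (Fin n₁) ℂ)
        (S : Fin K → Matrix (Fin m₂) (Fin n₂) ℂ),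
      (∑ i, R i ⊗ₖ (S i)ᵀ).rank ≤ K * (∑ i, R i ⊗ₖ S i).rank) := by
  constructor
  · intro h K m₁ n₁ m₂ n₂ R S
    rw [← flattenBC_tensorOfTerms]
    rcases eq_or_ne (tensorOfTerms R S) 0 with hψ | hψ
    · simp [hψ]
    calc (flattenBC (tensorOfTerms R S)).rank
        ≤ (flattenAB (tensorOfTerms R S)).rank * (flattenAC (tensorOfTerms R S)).rank :=
          h _ _ _ _ _ hψ
      _ ≤ K * (∑ i, R i ⊗ₖ S i).rank := by
          rw [flattenAC_tensorOfTerms, rank_transpose]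
          gcongr
          simpa using rank_flattenAB_tensorOfTerms_le R S
  · intro h dA dB dC dD ψ _
    obtain ⟨R, S, hψ⟩ := exists_tensorOfTerms_eq ψ
    calc (flattenBC ψ).rank = (∑ k, R k ⊗ₖ (S k)ᵀ).rank := by rw [← flattenBC_tensorOfTerms, hψ]
      _ ≤ (flattenAB ψ).rank * (∑ k, R k ⊗ₖ S k).rank := h _ _ _ _ _ R S
      _ = (flattenAB ψ).rank * (flattenAC ψ).rank := by
          rw [← rank_transpose (∑ k, R k ⊗ₖ S k), ← flattenAC_tensorOfTerms, hψ]
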